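/- Let Ḡ be an algebraic monoid with zero over a field k, with unit group G, and let X = Spec(A) be an affine G-scheme. Then the Białynicki-Birula functor X⁺ is represented by a closed subscheme of X, namely Spec(A/I) where I ⊆ A is the ideal generated by the kernel 𝒢 of the universal quotient Ḡ-representation A → A/𝒢. -/

import Mathlib

/-!
Algebraic core: affine algebraic monoids over a field `k` encoded via their
coordinate (commutative) bialgebras, with the functor of points on commutative
`k`-algebras; actions on affine schemes via coactions on coordinate rings.
-/

open TensorProduct

noncomputable section

namespace BBAlg

variable (k : Type) [Field k]

/-- The algebraic closure of `k`. -/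
abbrev Kb := AlgebraicClosure k

variable (H : Type) [CommRing H] [Bialgebra k H]

/-- The convolution product of two `R`-points of `Spec H`, i.e. the product of
points in the monoid scheme `Spec H`. -/
def conv {R : Type} [CommRing R] [Algebra k R] (x y : H →ₐ[k] R) : H →ₐ[k] R :=
  (Algebra.TensorProduct.lmul' k).comp
    ((Algebra.TensorProduct.map x y).comp (Bialgebra.comulAlgHom k H))

/-- The identity `R`-point of the monoid scheme `Spec H`. -/
def onePt (R : Type) [CommRing R] [Algebra k R] : H →ₐ[k] R :=
  (Algebra.ofId k R).comp (Bialgebra.counitAlgHom k H)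

/-- `Spec H` is a geometrically integral affine variety over `k`. -/
structure IsAffAlgVariety : Prop where
  finiteType : Algebra.FiniteType k H
  geomIntegral : IsDomain (Kb k ⊗[k] H)

/-- A zero element for the monoid scheme `Spec H`: an absorbing `k`-point. -/
structure ZeroPt where
  z : H →ₐ[k] k
  absorb_left : ∀ (R : Type) [CommRing R] [Algebra k R] (x : H →ₐ[k] R),
    conv k H ((Algebra.ofId k R).comp z) x = (Algebra.ofId k R).comp z
  absorb_right : ∀ (R : Type) [CommRing R] [Algebra k R] (x : H →ₐ[k] R),
    conv k H x ((Algebra.ofId k R).comp z) = (Algebra.ofId k R).comp z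

variable (L : Type) [CommRing L] [HopfAlgebra k L]

/-- The unit group of the affine monoid `Spec H`: a Hopf algebra `L` with a
bialgebra map `φ : H →ₐ L` inducing an open immersion `Spec L ↪ Spec H` whose
points are exactly the invertible points of `Spec H`. -/
structure UnitGroupAlg where
  φ : H →ₐ[k] L
  comul_compat : (Algebra.TensorProduct.map φ φ).comp (Bialgebra.comulAlgHom k H) =
    (Bialgebra.comulAlgHom k L).comp φ
  counit_compat : (Bialgebra.counitAlgHom k L).comp φ = Bialgebra.counitAlgHom k H
  openImmersion :
    AlgebraicGeometry.IsOpenImmersion (AlgebraicGeometry.Spec.map (CommRingCat.ofHom φ.toRingHom))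
  units_iff : ∀ (R : Type) [CommRing R] [Algebra k R] (x : H →ₐ[k] R),
    (∃ y : H →ₐ[k] R, conv k H x y = onePt k H R ∧ conv k H y x = onePt k H R) ↔
      ∃ xt : L →ₐ[k] R, xt.comp φ = x

/-- A Kempf structure on the affine algebraic monoid `Spec H` with zero `z0`
and unit group `Spec L`: a central one-parameter subgroup `𝔾ₘ,k̄ → Z(G)` whose
induced map to `Spec H ⊗ k̄` extends to the affine line sending `0` to the zero
point.  It is encoded via the functor of points on (`k̄`-)algebras: the
`R`-points of `𝔸¹_k̄` are the elements of `R`, the `R`-points of `𝔾ₘ,k̄` are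
the units of `R`. -/
structure KempfAlg (U : UnitGroupAlg k H L) (z0 : ZeroPt k H) where
  κ : ∀ (R : Type) [CommRing R] [Algebra k R] [Algebra (Kb k) R]
    [IsScalarTower k (Kb k) R], R → (H →ₐ[k] R)
  κ_natural : ∀ (R R' : Type) [CommRing R] [Algebra k R] [Algebra (Kb k) R]
    [IsScalarTower k (Kb k) R] [CommRing R'] [Algebra k R'] [Algebra (Kb k) R']
    [IsScalarTower k (Kb k) R'] (f : R →ₐ[Kb k] R') (s : R),
    κ R' (f s) = (f.restrictScalars k).comp (κ R s)
  κ_one : ∀ (R : Type) [CommRing R] [Algebra k R] [Algebra (Kb k) R]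
    [IsScalarTower k (Kb k) R], κ R 1 = onePt k H R
  κ_zero : ∀ (R : Type) [CommRing R] [Algebra k R] [Algebra (Kb k) R]
    [IsScalarTower k (Kb k) R], κ R 0 = (Algebra.ofId k R).comp z0.z
  κ_mul : ∀ (R : Type) [CommRing R] [Algebra k R] [Algebra (Kb k) R]
    [IsScalarTower k (Kb k) R] (s t : R), IsUnit s → IsUnit t →
    κ R (s * t) = conv k H (κ R s) (κ R t)
  κ_unit : ∀ (R : Type) [CommRing R] [Algebra k R] [Algebra (Kb k) R]
    [IsScalarTower k (Kb k) R] (s : R), IsUnit s →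
    ∃ xt : L →ₐ[k] R, xt.comp U.φ = κ R s
  κ_central : ∀ (R : Type) [CommRing R] [Algebra k R] [Algebra (Kb k) R]
    [IsScalarTower k (Kb k) R] (s : R), IsUnit s → ∀ y : L →ₐ[k] R,
    conv k H (κ R s) (y.comp U.φ) = conv k H (y.comp U.φ) (κ R s)

/-- A coaction of the bialgebra `H` on a commutative `k`-algebra `A`, i.e. an
action of the affine monoid scheme `Spec H` on `Spec A`. -/
structure CoactionOn (A : Type) [CommRing A] [Algebra k A] where
  ρ : A →ₐ[k] H ⊗[k] A
  counit : ∀ a : A,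
    (TensorProduct.map (Bialgebra.counitAlgHom k H).toLinearMap LinearMap.id) (ρ a) =
      (1 : k) ⊗ₜ[k] a
  coassoc : ∀ a : A,
    (TensorProduct.assoc k H H A) ((TensorProduct.map Coalgebra.comul LinearMap.id) (ρ a)) =
      (TensorProduct.map LinearMap.id ρ.toLinearMap) (ρ a)

/-- The action of an `R`-point `g` of `Spec H` on an `R`-point `x` of `Spec A`,
for a coaction `ρ`. -/
def actPt {A : Type} [CommRing A] [Algebra k A] {R : Type} [CommRing R]
    [Algebra k R] (ρ : A →ₐ[k] H ⊗[k] A) (g : H →ₐ[k] R) (x : A →ₐ[k] R) :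
    A →ₐ[k] R :=
  (Algebra.TensorProduct.lmul' k).comp ((Algebra.TensorProduct.map g x).comp ρ)

end BBAlg

namespace BBAlg

open TensorProduct

variable (k : Type) [Field k]

/-- `ρ` is a comodule structure over the coalgebra underlying `C`. -/
def IsLinCoaction (C : Type) [CommRing C] [Bialgebra k C] {V : Type}
    [AddCommGroup V] [Module k V] (ρ : V →ₗ[k] C ⊗[k] V) : Prop :=
  (∀ v : V,
    (TensorProduct.map (Bialgebra.counitAlgHom k C).toLinearMap LinearMap.id) (ρ v) =
      (1 : k) ⊗ₜ[k] v) ∧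
  (∀ v : V,
    (TensorProduct.assoc k C C V) ((TensorProduct.map Coalgebra.comul LinearMap.id) (ρ v)) =
      (TensorProduct.map LinearMap.id ρ) (ρ v))

/-- The subspace `C ⊗ W ⊆ C ⊗ V` for a subspace `W ⊆ V`. -/
def tensSub (C : Type) [AddCommGroup C] [Module k C] {V : Type} [AddCommGroup V]
    [Module k V] (W : Submodule k V) : Submodule k (C ⊗[k] V) :=
  LinearMap.range (TensorProduct.map (LinearMap.id : C →ₗ[k] C) W.subtype)

variable (H : Type) [CommRing H] [Bialgebra k H]
variable (L : Type) [CommRing L] [HopfAlgebra k L] (U : UnitGroupAlg k H L)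

/-- The left-translation coaction of the unit group `G = Spec L` on the monoid
`Ḡ = Spec H` itself, `H → L ⊗ H`. -/
def leftTransCoact : H →ₗ[k] L ⊗[k] H :=
  (TensorProduct.map U.φ.toLinearMap LinearMap.id).comp Coalgebra.comul

variable {A : Type} [CommRing A] [Algebra k A]
variable {C : Type} [CommRing C] [Algebra k C]

/-- A `T = Spec C`-family of points of `X⁺`, i.e. a morphism
`Ḡ × Spec C ⟶ X = Spec A`, is `G`-equivariant (for the left `G`-action on
`Ḡ` and the given `G`-action `σ` on `X`). -/
def IsEquivFamily (σ : A →ₐ[k] L ⊗[k] A) (ψ : A →ₐ[k] H ⊗[k] C) : Prop :=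
  ∀ a : A,
    (TensorProduct.assoc k L H C)
      ((TensorProduct.map (leftTransCoact k H L U) LinearMap.id) (ψ a)) =
    (TensorProduct.map LinearMap.id ψ.toLinearMap) (σ a)

/-- Evaluation of a family `Ḡ × Spec C ⟶ X` at the unit `1 ∈ Ḡ`. -/
def evalOne (ψ : A →ₐ[k] H ⊗[k] C) : A →ₐ[k] C :=
  (Algebra.TensorProduct.lid k C).toAlgHom.comp
    ((Algebra.TensorProduct.map (Bialgebra.counitAlgHom k H) (AlgHom.id k C)).comp ψ)

end BBAlg

/-!
An equivariant family `ψ : Ḡ × Spec C ⟶ X` is the same as a `G`-map from `A` to the cofree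
`Ḡ`-comodule `H ⊗ C`. By the universal property of `A ↠ A/𝒢` such a map factors through `A/𝒢`,
so it kills `𝒢` and its value at `1` kills `I`. Conversely, a point `χ` killing `I` induces
`χ̄ : A/𝒢 → C`, and `(id ⊗ χ̄) ∘ ρ_W` is the comodule map into `H ⊗ C` whose value at `1` is `χ̄`.
Because `G` is dense in `Ḡ` (`φ : H → L` is injective), a `G`-map `ψ : A → H ⊗ C` is determined
by its value `χ` at `1`, through `(φ ⊗ id) ∘ ψ = (id ⊗ χ) ∘ σ`: this gives uniqueness, and it
shows that the linear map just built is multiplicative, since the right-hand side is.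
The ideal `I` is `G`-stable because `σ` is multiplicative and maps `𝒢` into `L ⊗ 𝒢`.
-/

namespace BBAlg

open TensorProduct LinearMap

variable {k : Type} [Field k]

theorem IsAffAlgVariety.isDomain {H : Type} [CommRing H] [Bialgebra k H]
    (hH : IsAffAlgVariety k H) : IsDomain H :=
  have := hH.geomIntegral
  Function.Injective.isDomain (Algebra.TensorProduct.includeRight : H →ₐ[k] Kb k ⊗[k] H).toRingHom
    (Algebra.TensorProduct.includeRight_injective (algebraMap k (Kb k)).injective)

theorem UnitGroupAlg.injective_φ {H L : Type} [CommRing H] [IsDomain H] [Bialgebra k H]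
    [CommRing L] [HopfAlgebra k L] (U : UnitGroupAlg k H L) : Function.Injective U.φ := by
  have : Nontrivial L := (Bialgebra.counitAlgHom k L).toRingHom.domain_nontrivial
  obtain ⟨p⟩ : Nonempty (PrimeSpectrum L) := inferInstance
  have := U.openImmersion
  -- `Spec H` is irreducible, so the nonempty open image of `Spec L` is dense
  have hdense : DenseRange (PrimeSpectrum.comap U.φ.toRingHom) :=
    (AlgebraicGeometry.Spec.map (CommRingCat.ofHom U.φ.toRingHom)).isOpenEmbedding.isOpen_range
      |>.dense ⟨_, p, rfl⟩
  refine (injective_iff_map_eq_zero U.φ).2 fun a ha => ?_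
  exact (mem_nilradical.1
    ((PrimeSpectrum.denseRange_comap_iff_ker_le_nilRadical _).1 hdense ha)).eq_zero

theorem tensSub_mono (B : Type) [AddCommGroup B] [Module k B] {V : Type} [AddCommGroup V]
    [Module k V] {W W' : Submodule k V} (h : W ≤ W') : tensSub k B W ≤ tensSub k B W' := by
  rw [tensSub, tensSub, ← Submodule.subtype_comp_inclusion W W' h, ← lTensor_def, ← lTensor_def,
    lTensor_comp]
  exact range_comp_le_range _ _

theorem tensSub_ideal {B A : Type} [CommRing B] [Algebra k B] [CommRing A] [Algebra k A]
    (I : Ideal A) :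
    tensSub k B (I.restrictScalars k) =
      (I.map Algebra.TensorProduct.includeRight).restrictScalars k :=
  (Ideal.map_includeRight_eq I).symm

theorem map_mem_tensSub_span {B A : Type} [CommRing B] [Algebra k B] [CommRing A] [Algebra k A]
    (σ : A →ₐ[k] B ⊗[k] A) (V : Submodule k A) (hV : ∀ v ∈ V, σ v ∈ tensSub k B V) (a : A)
    (ha : a ∈ Ideal.span (V : Set A)) :
    σ a ∈ tensSub k B ((Ideal.span (V : Set A)).restrictScalars k) := by
  have hV' : V ≤ (Ideal.span (V : Set A)).restrictScalars k := Ideal.subset_span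
  rw [tensSub_ideal]
  refine (Ideal.span_le (I := Ideal.comap σ _)).2 (fun v hv => ?_) ha
  simpa only [tensSub_ideal, SetLike.mem_coe, Ideal.mem_comap, Submodule.restrictScalars_mem]
    using tensSub_mono B hV' (hV v hv)

section Cofree

variable (k) (H : Type) [CommRing H] [Bialgebra k H]
variable (M : Type) [AddCommGroup M] [Module k M]

def cofreeCoaction : H ⊗[k] M →ₗ[k] H ⊗[k] (H ⊗[k] M) :=
  (TensorProduct.assoc k H H M).toLinearMap ∘ₗ Coalgebra.comul.rTensor M

def counitEval : H ⊗[k] M →ₗ[k] M :=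
  (TensorProduct.lid k M).toLinearMap ∘ₗ Coalgebra.counit.rTensor M

variable {k H M}

theorem cofreeCoaction_tmul (h : H) (m : M) :
    cofreeCoaction k H M (h ⊗ₜ m) = TensorProduct.assoc k H H M (Coalgebra.comul h ⊗ₜ m) :=
  rfl

theorem cofreeCoaction_lTensor {N : Type} [AddCommGroup N] [Module k N] (f : N →ₗ[k] M)
    (x : H ⊗[k] N) :
    cofreeCoaction k H M (f.lTensor H x) = (f.lTensor H).lTensor H (cofreeCoaction k H N x) := by
  induction x using TensorProduct.induction_on with
  | zero => simp
  | add x y hx hy => simp only [map_add, hx, hy]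
  | tmul h n =>
    rw [lTensor_tmul, cofreeCoaction_tmul, cofreeCoaction_tmul]
    generalize Coalgebra.comul (R := k) h = x
    induction x using TensorProduct.induction_on with
    | zero => simp
    | add x y hx hy => simp only [map_add, hx, hy, TensorProduct.add_tmul]
    | tmul a b => rfl

theorem counitEval_lTensor {N : Type} [AddCommGroup N] [Module k N] (f : N →ₗ[k] M)
    (x : H ⊗[k] N) : counitEval k H M (f.lTensor H x) = f (counitEval k H N x) := by
  induction x using TensorProduct.induction_on with
  | zero => simp
  | add x y hx hy => simp only [map_add, hx, hy]
  | tmul h n => simp [counitEval]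

theorem isLinCoaction_cofreeCoaction : IsLinCoaction k H (cofreeCoaction k H M) := by
  constructor
  · intro w
    induction w using TensorProduct.induction_on with
    | zero => simp
    | add x y hx hy => simp only [map_add, hx, hy, TensorProduct.tmul_add]
    | tmul h m =>
      rw [cofreeCoaction_tmul, show (1 : k) ⊗ₜ[k] (h ⊗ₜ[k] m) =
        TensorProduct.assoc k k H M (((1 : k) ⊗ₜ[k] h) ⊗ₜ m) from rfl,
        ← Coalgebra.rTensor_counit_comul]
      generalize Coalgebra.comul (R := k) h = x
      induction x using TensorProduct.induction_on with
      | zero => simp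
      | add x y hx hy => simp only [map_add, hx, hy, TensorProduct.add_tmul]
      | tmul a b => rfl
  · intro w
    induction w using TensorProduct.induction_on with
    | zero => simp
    | add x y hx hy => simp only [map_add, hx, hy]
    | tmul h m =>
      -- both sides are the image of the two sides of coassociativity of `Δ h` under `G`
      let G : H ⊗[k] (H ⊗[k] H) →ₗ[k] H ⊗[k] (H ⊗[k] (H ⊗[k] M)) :=
        (TensorProduct.assoc k H H M).toLinearMap.lTensor H ∘ₗ
          (TensorProduct.assoc k H (H ⊗[k] H) M).toLinearMap ∘ₗ (TensorProduct.mk k _ M).flip m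
      have hleft : ∀ x : H ⊗[k] H, TensorProduct.assoc k H H (H ⊗[k] M)
          (Coalgebra.comul.rTensor (H ⊗[k] M) (TensorProduct.assoc k H H M (x ⊗ₜ m))) =
          G (TensorProduct.assoc k H H H (Coalgebra.comul.rTensor H x)) := by
        intro x
        induction x using TensorProduct.induction_on with
        | zero => simp
        | add x y hx hy => simp only [map_add, hx, hy, TensorProduct.add_tmul]
        | tmul a b =>
          simp only [assoc_tmul, rTensor_tmul]
          generalize Coalgebra.comul (R := k) a = y
          induction y using TensorProduct.induction_on with
          | zero => simp
          | add x y hx hy => simp only [map_add, hx, hy, TensorProduct.add_tmul]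
          | tmul c d => rfl
      have hright : ∀ x : H ⊗[k] H, (cofreeCoaction k H M).lTensor H
          (TensorProduct.assoc k H H M (x ⊗ₜ m)) = G (Coalgebra.comul.lTensor H x) := by
        intro x
        induction x using TensorProduct.induction_on with
        | zero => simp
        | add x y hx hy => simp only [map_add, hx, hy, TensorProduct.add_tmul]
        | tmul a b => rfl
      exact (hleft _).trans ((congrArg G (Coalgebra.coassoc_apply h)).trans (hright _).symm)

theorem lTensor_counitEval_cofreeCoaction (w : H ⊗[k] M) :
    (counitEval k H M).lTensor H (cofreeCoaction k H M w) = w := by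
  induction w using TensorProduct.induction_on with
  | zero => simp
  | add x y hx hy => simp only [map_add, hx, hy]
  | tmul h m =>
    rw [cofreeCoaction_tmul]
    trans TensorProduct.rid k H (Coalgebra.counit.lTensor H (Coalgebra.comul (R := k) h)) ⊗ₜ m
    · generalize Coalgebra.comul (R := k) h = x
      induction x using TensorProduct.induction_on with
      | zero => simp
      | add x y hx hy => simp only [map_add, hx, hy, TensorProduct.add_tmul]
      | tmul a b => simp [counitEval, TensorProduct.smul_tmul]
    · simp

end Cofree

section Equivariance

variable {H : Type} [CommRing H] [Bialgebra k H] {L : Type} [CommRing L] [HopfAlgebra k L]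
variable (U : UnitGroupAlg k H L)
variable {V W W' : Type} [AddCommGroup V] [Module k V] [AddCommGroup W] [Module k W]
  [AddCommGroup W'] [Module k W']

def IsColinear (ρ : W →ₗ[k] H ⊗[k] W) (ρ' : W' →ₗ[k] H ⊗[k] W') (g : W →ₗ[k] W') : Prop :=
  ∀ w, ρ' (g w) = g.lTensor H (ρ w)

def IsEquivariant (σ : V →ₗ[k] L ⊗[k] V) (ρ : W →ₗ[k] H ⊗[k] W) (f : V →ₗ[k] W) : Prop :=
  ∀ v, f.lTensor L (σ v) = U.φ.toLinearMap.rTensor W (ρ (f v))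

variable {U}

theorem IsColinear.comp_isEquivariant {σ : V →ₗ[k] L ⊗[k] V} {ρ : W →ₗ[k] H ⊗[k] W}
    {ρ' : W' →ₗ[k] H ⊗[k] W'} {g : W →ₗ[k] W'} {f : V →ₗ[k] W} (hg : IsColinear ρ ρ' g)
    (hf : IsEquivariant U σ ρ f) : IsEquivariant U σ ρ' (g ∘ₗ f) := fun v => by
  rw [lTensor_comp, comp_apply, hf, ← comp_apply, ← comp_apply, lTensor_comp_rTensor,
    ← rTensor_comp_lTensor, comp_apply, comp_apply, ← hg, comp_apply]

theorem isColinear_lTensor_comp {M : Type} [AddCommGroup M] [Module k M]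
    {ρ : W →ₗ[k] H ⊗[k] W} (hρ : IsLinCoaction k H ρ) (f : W →ₗ[k] M) :
    IsColinear ρ (cofreeCoaction k H M) (f.lTensor H ∘ₗ ρ) := fun w => by
  rw [comp_apply, cofreeCoaction_lTensor, lTensor_comp, comp_apply]
  exact congrArg _ (hρ.2 w)

theorem counitEval_lTensor_comp_apply {M : Type} [AddCommGroup M] [Module k M]
    {ρ : W →ₗ[k] H ⊗[k] W} (hρ : IsLinCoaction k H ρ) (f : W →ₗ[k] M) (w : W) :
    counitEval k H M (f.lTensor H (ρ w)) = f w := by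
  rw [counitEval_lTensor]
  exact congrArg (f ∘ TensorProduct.lid k W) (hρ.1 w) |>.trans (by simp)

theorem assoc_rTensor_leftTransCoact {C : Type} [AddCommGroup C] [Module k C] (x : H ⊗[k] C) :
    TensorProduct.assoc k L H C ((leftTransCoact k H L U).rTensor C x) =
      U.φ.toLinearMap.rTensor (H ⊗[k] C) (cofreeCoaction k H C x) := by
  induction x using TensorProduct.induction_on with
  | zero => simp
  | add x y hx hy => simp only [map_add, hx, hy]
  | tmul h c =>
    rw [rTensor_tmul, cofreeCoaction_tmul, leftTransCoact, comp_apply]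
    generalize Coalgebra.comul (R := k) h = x
    induction x using TensorProduct.induction_on with
    | zero => simp
    | add x y hx hy => simp only [map_add, hx, hy, TensorProduct.add_tmul]
    | tmul a b => rfl

theorem isEquivFamily_iff {A C : Type} [CommRing A] [Algebra k A] [CommRing C] [Algebra k C]
    {σ : A →ₐ[k] L ⊗[k] A} {ψ : A →ₐ[k] H ⊗[k] C} :
    IsEquivFamily k H L U σ ψ ↔
      IsEquivariant U σ.toLinearMap (cofreeCoaction k H C) ψ.toLinearMap := by
  refine forall_congr' fun a => ?_
  rw [← rTensor_def, assoc_rTensor_leftTransCoact, eq_comm]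
  rfl

end Equivariance

section Representability

variable {H L A C M : Type} [CommRing H] [Bialgebra k H] [CommRing L] [HopfAlgebra k L]
  [CommRing A] [Algebra k A] [CommRing C] [Algebra k C] [AddCommGroup M] [Module k M]
  {U : UnitGroupAlg k H L}

theorem toLinearMap_evalOne (ψ : A →ₐ[k] H ⊗[k] C) :
    (evalOne k H ψ).toLinearMap = counitEval k H C ∘ₗ ψ.toLinearMap :=
  rfl

theorem IsEquivariant.rTensor_apply {V : Type} [AddCommGroup V] [Module k V]
    {σ : V →ₗ[k] L ⊗[k] V} {f : V →ₗ[k] H ⊗[k] M}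
    (hf : IsEquivariant U σ (cofreeCoaction k H M) f) (v : V) :
    U.φ.toLinearMap.rTensor M (f v) = (counitEval k H M ∘ₗ f).lTensor L (σ v) :=
  calc U.φ.toLinearMap.rTensor M (f v)
      = U.φ.toLinearMap.rTensor M
          ((counitEval k H M).lTensor H (cofreeCoaction k H M (f v))) := by
        rw [lTensor_counitEval_cofreeCoaction]
    _ = (counitEval k H M).lTensor L
          (U.φ.toLinearMap.rTensor (H ⊗[k] M) (cofreeCoaction k H M (f v))) := by
        rw [← comp_apply, ← comp_apply, rTensor_comp_lTensor, ← lTensor_comp_rTensor]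
        rfl
    _ = (counitEval k H M ∘ₗ f).lTensor L (σ v) := by
        rw [← hf, lTensor_comp, comp_apply]

theorem IsEquivariant.ext_of_injective {V : Type} [AddCommGroup V] [Module k V]
    (hφ : Function.Injective U.φ) {σ : V →ₗ[k] L ⊗[k] V} {f f' : V →ₗ[k] H ⊗[k] M}
    (hf : IsEquivariant U σ (cofreeCoaction k H M) f)
    (hf' : IsEquivariant U σ (cofreeCoaction k H M) f')
    (h : counitEval k H M ∘ₗ f = counitEval k H M ∘ₗ f') : f = f' :=
  ext fun v => Module.Flat.rTensor_preserves_injective_linearMap _ hφ <| by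
    rw [hf.rTensor_apply, hf'.rTensor_apply, h]

theorem IsEquivariant.exists_algHom_toLinearMap_eq (hφ : Function.Injective U.φ)
    {σ : A →ₐ[k] L ⊗[k] A} {f : A →ₗ[k] H ⊗[k] C}
    (hf : IsEquivariant U σ.toLinearMap (cofreeCoaction k H C) f) {χ : A →ₐ[k] C}
    (hfχ : counitEval k H C ∘ₗ f = χ.toLinearMap) :
    ∃ ψ : A →ₐ[k] H ⊗[k] C, ψ.toLinearMap = f := by
  let Φ := Algebra.TensorProduct.map U.φ (AlgHom.id k C)
  have hΦ : Function.Injective Φ := Module.Flat.rTensor_preserves_injective_linearMap _ hφ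
  have hΦf (a : A) : Φ (f a) = Algebra.TensorProduct.map (AlgHom.id k L) χ (σ a) := by
    have h := hf.rTensor_apply a
    rw [hfχ] at h
    exact h
  exact ⟨AlgHom.ofLinearMap f (hΦ <| by rw [hΦf, map_one, map_one, map_one])
    fun x y => hΦ <| by rw [hΦf, map_mul Φ, hΦf, hΦf, map_mul σ, map_mul], rfl⟩

end Representability

end BBAlg

open BBAlg TensorProduct in
theorem statement_9_general
    (k : Type) [Field k]
    -- the algebraic monoid `Ḡ = Spec H` with zero and unit group `G = Spec L`:
    (H : Type) [CommRing H] [Bialgebra k H] (hH : IsAffAlgVariety k H)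
    (L : Type) [CommRing L] [HopfAlgebra k L] (U : UnitGroupAlg k H L)
    -- an affine `G`-scheme `X = Spec A`:
    (A : Type) [CommRing A] [Algebra k A]
    (σ : A →ₐ[k] L ⊗[k] A)
    -- `𝒢` is the kernel of the universal quotient `Ḡ`-representation of `A`
    -- (the `G`-subrepresentation from the universal property of
    -- Lemma `statement_8`):
    (𝒢 : Submodule k A) (h𝒢sub : ∀ v ∈ 𝒢, σ.toLinearMap v ∈ tensSub k L 𝒢)
    (ρW : A ⧸ 𝒢 →ₗ[k] H ⊗[k] (A ⧸ 𝒢)) (hρW : IsLinCoaction k H ρW)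
    (hcompat : ∀ v : A,
      (TensorProduct.map U.φ.toLinearMap LinearMap.id) (ρW (𝒢.mkQ v)) =
        (TensorProduct.map LinearMap.id 𝒢.mkQ) (σ.toLinearMap v))
    (huniv : ∀ (W' : Type) [AddCommGroup W'] [Module k W']
      (ρ' : W' →ₗ[k] H ⊗[k] W'), IsLinCoaction k H ρ' →
      ∀ f : A →ₗ[k] W',
      (∀ v : A,
        (TensorProduct.map LinearMap.id f) (σ.toLinearMap v) =
          (TensorProduct.map U.φ.toLinearMap LinearMap.id) (ρ' (f v))) →
      ∃! g : A ⧸ 𝒢 →ₗ[k] W',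
        (∀ x : A ⧸ 𝒢, ρ' (g x) = (TensorProduct.map LinearMap.id g) (ρW x)) ∧
        g.comp 𝒢.mkQ = f) :
    -- conclusion, with `I` the ideal generated by `𝒢`:
    (∀ a : A, a ∈ Ideal.span (𝒢 : Set A) →
        σ.toLinearMap a ∈ tensSub k L ((Ideal.span (𝒢 : Set A)).restrictScalars k)) ∧
    (∀ (C : Type) [CommRing C] [Algebra k C],
      (∀ ψ : A →ₐ[k] H ⊗[k] C, IsEquivFamily k H L U σ ψ →
        Ideal.span (𝒢 : Set A) ≤ RingHom.ker (evalOne k H ψ)) ∧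
      (∀ χ : A →ₐ[k] C, Ideal.span (𝒢 : Set A) ≤ RingHom.ker χ →
        ∃! ψ : A →ₐ[k] H ⊗[k] C, IsEquivFamily k H L U σ ψ ∧ evalOne k H ψ = χ)) := by
  have := hH.isDomain
  have hφ := U.injective_φ
  refine ⟨map_mem_tensSub_span σ 𝒢 h𝒢sub, fun C _ _ => ⟨fun ψ hψ => ?_, fun χ hχ => ?_⟩⟩
  · obtain ⟨g, -, hg⟩ :=
      (huniv (H ⊗[k] C) (cofreeCoaction k H C) isLinCoaction_cofreeCoaction ψ.toLinearMap
        (isEquivFamily_iff.1 hψ)).exists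
    refine Ideal.span_le.2 fun v hv => ?_
    have hv0 : 𝒢.mkQ v = 0 := (Submodule.Quotient.mk_eq_zero 𝒢).2 hv
    rw [SetLike.mem_coe, RingHom.mem_ker, ← AlgHom.toLinearMap_apply, toLinearMap_evalOne,
      ← hg, LinearMap.comp_apply, LinearMap.comp_apply, hv0, map_zero, map_zero]
  · let χ' := 𝒢.liftQ χ.toLinearMap fun v hv => hχ (Ideal.subset_span hv)
    have hf : IsEquivariant U σ.toLinearMap (cofreeCoaction k H C)
        ((χ'.lTensor H ∘ₗ ρW) ∘ₗ 𝒢.mkQ) :=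
      (isColinear_lTensor_comp hρW χ').comp_isEquivariant fun v => (hcompat v).symm
    have hfχ : counitEval k H C ∘ₗ (χ'.lTensor H ∘ₗ ρW) ∘ₗ 𝒢.mkQ = χ.toLinearMap :=
      LinearMap.ext fun a => counitEval_lTensor_comp_apply hρW χ' (𝒢.mkQ a)
    obtain ⟨ψ, hψ⟩ := hf.exists_algHom_toLinearMap_eq hφ hfχ
    refine ⟨ψ, ⟨isEquivFamily_iff.2 (hψ ▸ hf), AlgHom.toLinearMap_injective <| by
      rw [toLinearMap_evalOne, hψ, hfχ]⟩,
      fun ψ' ⟨hψ', hψ'χ⟩ => AlgHom.toLinearMap_injective ?_⟩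
    refine (isEquivFamily_iff.1 hψ').ext_of_injective hφ (hψ ▸ hf) ?_
    rw [← toLinearMap_evalOne, hψ'χ, hψ, hfχ]

open BBAlg TensorProduct in
/-- Let `Ḡ = Spec H` be an algebraic monoid with zero over a
field `k` with unit group `G = Spec L`, and let `X = Spec A` be an affine
`G`-scheme.  Let `A ↠ A/𝒢` be the universal quotient `Ḡ`-representation of the
`G`-representation `A` (as in Lemma `statement_8`) and let `I ⊆ A` be the
ideal generated by `𝒢`.  Then `I` is `G`-stable and the Białynicki-Birula
functor `X⁺` is represented by the closed subscheme `Spec (A/I)` of `X`: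
for every (test) `k`-algebra `C`, evaluation at `1` is a bijection between
`G`-equivariant families `Ḡ × Spec C ⟶ X` and morphisms `Spec C ⟶ Spec (A/I)`
(i.e. points `A →ₐ C` killing `I`). -/
theorem statement_9
    (k : Type) [Field k]
    -- the algebraic monoid `Ḡ = Spec H` with zero and unit group `G = Spec L`:
    (H : Type) [CommRing H] [Bialgebra k H] (hH : IsAffAlgVariety k H)
    (z0 : ZeroPt k H)
    (L : Type) [CommRing L] [HopfAlgebra k L] (U : UnitGroupAlg k H L)
    -- an affine `G`-scheme `X = Spec A`:
    (A : Type) [CommRing A] [Algebra k A]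
    (σ : A →ₐ[k] L ⊗[k] A) (hσ : IsLinCoaction k L σ.toLinearMap)
    -- `𝒢` is the kernel of the universal quotient `Ḡ`-representation of `A`
    -- (the `G`-subrepresentation from the universal property of
    -- Lemma `statement_8`):
    (𝒢 : Submodule k A) (h𝒢sub : ∀ v ∈ 𝒢, σ.toLinearMap v ∈ tensSub k L 𝒢)
    (ρW : A ⧸ 𝒢 →ₗ[k] H ⊗[k] (A ⧸ 𝒢)) (hρW : IsLinCoaction k H ρW)
    (hcompat : ∀ v : A,
      (TensorProduct.map U.φ.toLinearMap LinearMap.id) (ρW (𝒢.mkQ v)) =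
        (TensorProduct.map LinearMap.id 𝒢.mkQ) (σ.toLinearMap v))
    (huniv : ∀ (W' : Type) [AddCommGroup W'] [Module k W']
      (ρ' : W' →ₗ[k] H ⊗[k] W'), IsLinCoaction k H ρ' →
      ∀ f : A →ₗ[k] W',
      (∀ v : A,
        (TensorProduct.map LinearMap.id f) (σ.toLinearMap v) =
          (TensorProduct.map U.φ.toLinearMap LinearMap.id) (ρ' (f v))) →
      ∃! g : A ⧸ 𝒢 →ₗ[k] W',
        (∀ x : A ⧸ 𝒢, ρ' (g x) = (TensorProduct.map LinearMap.id g) (ρW x)) ∧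
        g.comp 𝒢.mkQ = f) :
    -- conclusion, with `I` the ideal generated by `𝒢`:
    (∀ a : A, a ∈ Ideal.span (𝒢 : Set A) →
        σ.toLinearMap a ∈ tensSub k L ((Ideal.span (𝒢 : Set A)).restrictScalars k)) ∧
    (∀ (C : Type) [CommRing C] [Algebra k C],
      (∀ ψ : A →ₐ[k] H ⊗[k] C, IsEquivFamily k H L U σ ψ →
        Ideal.span (𝒢 : Set A) ≤ RingHom.ker (evalOne k H ψ)) ∧
      (∀ χ : A →ₐ[k] C, Ideal.span (𝒢 : Set A) ≤ RingHom.ker χ →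
        ∃! ψ : A →ₐ[k] H ⊗[k] C, IsEquivFamily k H L U σ ψ ∧ evalOne k H ψ = χ)) :=
  statement_9_general k H hH L U A σ 𝒢 h𝒢sub ρW hρW hcompat huniv
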